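/- The mutual information of the isotropic state is exponentially small in the fidelity: for every integer d ≥ 2 and every F ∈ [0,1], the quantity I(F,d) = 2·log d − S(F,d) satisfies I(F,d) ≤ 2F·log d + (1−F)/(d²−1). -/

import Mathlib

/-!
With `D = d² − 1` we have `2 log d = log (D + 1)`, so the bound is the sum of
`(1 − F) · log (1 + 1/D) ≤ (1 − F) / D` and the nonnegativity of the binary entropy of `F`.
-/

open Real

lemma Real.log_add_one_sub_log_le_inv {x : ℝ} (hx : 0 < x) : log (x + 1) - log x ≤ x⁻¹ := by
  rw [← log_div (by positivity) hx.ne']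
  calc log ((x + 1) / x) ≤ (x + 1) / x - 1 := log_le_sub_one_of_pos (by positivity)
    _ = x⁻¹ := by field_simp; ring

lemma Real.mul_log_div (x : ℝ) {y : ℝ} (hy : y ≠ 0) :
    x * log (x / y) = x * log x - x * log y := by
  rcases eq_or_ne x 0 with rfl | hx
  · simp
  · rw [log_div hx hy, mul_sub]

/-- The mutual information of the isotropic state is exponentially small in the fidelity:
`I(F,d) = 2·log d − S(F,d) ≤ 2F·log d + (1−F)/(d²−1)`, where
`S(F,d) = −F·log F − (1−F)·log((1−F)/(d²−1))` is the von Neumann entropy of the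
isotropic state (with the convention `0·log 0 = 0`, automatic since `Real.log 0 = 0`). -/
theorem isoState_mutualInfo_upper_bound (d : ℕ) (hd : 2 ≤ d) (F : ℝ)
    (hF : F ∈ Set.Icc (0 : ℝ) 1) :
    2 * Real.log d -
        (-F * Real.log F - (1 - F) * Real.log ((1 - F) / ((d : ℝ) ^ 2 - 1))) ≤
      2 * F * Real.log d + (1 - F) / ((d : ℝ) ^ 2 - 1) := by
  obtain ⟨hF0, hF1⟩ := hF
  set D : ℝ := (d : ℝ) ^ 2 - 1
  have hD : 0 < D := by
    have : (2 : ℝ) ≤ d := by exact_mod_cast hd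
    nlinarith
  have hlog_d : 2 * log d = log (D + 1) := by
    rw [sub_add_cancel, log_pow, Nat.cast_ofNat]
  have hgap : (1 - F) * (log (D + 1) - log D) ≤ (1 - F) * D⁻¹ :=
    mul_le_mul_of_nonneg_left (log_add_one_sub_log_le_inv hD) (by linarith)
  have hentropy : 0 ≤ negMulLog F + negMulLog (1 - F) :=
    binEntropy_eq_negMulLog_add_negMulLog_one_sub F ▸ binEntropy_nonneg hF0 hF1
  simp only [negMulLog] at hentropy
  rw [mul_log_div _ hD.ne', div_eq_mul_inv, mul_comm 2 F, mul_assoc, hlog_d]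
  linarith
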